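/- arXiv:math/0403521 — 2 statements merged into one kernel-verified Lean document; each statement's English description precedes it below -/
import Mathlib

section
/- If f : ℝ → ℝ is integrable on [0, ∞), then for every fixed τ > 0, the quantity ε · ∫₀^{τ/ε} s·f(s) ds tends to 0 as ε → 0⁺. -/
open MeasureTheory Filter intervalIntegral

/-- If `f` is integrable on `[0, ∞)`, then for every fixed `τ > 0`,
`ε · ∫₀^{τ/ε} s f s ds → 0` as `ε → 0⁺`. -/
theorem stmt1 (f : ℝ → ℝ) (hf : IntegrableOn f (Set.Ici 0)) (τ : ℝ) (hτ : 0 < τ) :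
    Tendsto (fun ε : ℝ => ε * ∫ s in (0:ℝ)..(τ / ε), s * f s)
      (nhdsWithin 0 (Set.Ioi 0)) (nhds 0) := by
  set μ : Measure ℝ := volume.restrict (Set.Ici 0) with hμ
  have key : Tendsto
      (fun ε : ℝ => ∫ s, Set.indicator (Set.Ioc 0 (τ / ε)) (fun s => ε * (s * f s)) s ∂μ)
      (nhdsWithin 0 (Set.Ioi 0)) (nhds (∫ s, (0:ℝ) ∂μ)) := by
    apply MeasureTheory.tendsto_integral_filter_of_dominated_convergence (fun s => τ * |f s|)
    · filter_upwards [self_mem_nhdsWithin] with ε hε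
      exact (((aestronglyMeasurable_id.const_mul ε).mul hf.aestronglyMeasurable).congr
        (Filter.Eventually.of_forall fun s => by simp; ring)).indicator measurableSet_Ioc
    · filter_upwards [self_mem_nhdsWithin] with ε (hε : 0 < ε)
      filter_upwards with s
      by_cases hs : s ∈ Set.Ioc 0 (τ / ε)
      · rw [Set.indicator_of_mem hs]
        have h1 : ε * s ≤ τ := by
          rw [mul_comm]; exact (le_div_iff₀ hε).mp hs.2
        calc ‖ε * (s * f s)‖ = (ε * s) * |f s| := by
              rw [Real.norm_eq_abs, abs_mul, abs_mul, abs_of_pos hε, abs_of_pos hs.1]; ring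
          _ ≤ τ * |f s| := by
              apply mul_le_mul_of_nonneg_right h1 (abs_nonneg _)
      · rw [Set.indicator_of_notMem hs]
        simp only [norm_zero]
        positivity
    · exact (hf.norm.const_mul τ)
    · filter_upwards with s
      by_cases hs : 0 < s
      · have hev : ∀ᶠ ε in nhdsWithin (0:ℝ) (Set.Ioi 0),
            ε * (s * f s) = Set.indicator (Set.Ioc 0 (τ / ε)) (fun s => ε * (s * f s)) s := by
          filter_upwards [Ioo_mem_nhdsGT_of_mem (Set.left_mem_Ico.mpr (div_pos hτ hs))]
            with ε hε
          have h2 : ε * s < τ := (lt_div_iff₀ hs).mp hε.2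
          have h3 : s ≤ τ / ε := (le_div_iff₀ hε.1).mpr (by linarith)
          exact (Set.indicator_of_mem (show s ∈ Set.Ioc 0 (τ / ε) from ⟨hs, h3⟩) (fun s => ε * (s * f s))).symm
        refine Tendsto.congr' hev ?_
        have : Tendsto (fun ε : ℝ => ε * (s * f s)) (nhds 0) (nhds (0 * (s * f s))) :=
          (tendsto_id.mul_const _)
        simpa using this.mono_left nhdsWithin_le_nhds
      · apply Tendsto.congr' (f₁ := fun _ => (0:ℝ))
        · filter_upwards with ε
          exact (Set.indicator_of_notMem (fun h => hs h.1) _).symm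
        · exact tendsto_const_nhds
  rw [MeasureTheory.integral_zero] at key
  refine key.congr' ?_
  filter_upwards [self_mem_nhdsWithin] with ε (hε : 0 < ε)
  have hb : (0:ℝ) ≤ τ / ε := (div_pos hτ hε).le
  rw [intervalIntegral.integral_of_le hb]
  rw [MeasureTheory.integral_indicator measurableSet_Ioc, hμ,
    Measure.restrict_restrict measurableSet_Ioc,
    Set.inter_eq_left.mpr (fun x hx => hx.1.le)]
  rw [← MeasureTheory.integral_const_mul]
end

section
/- For all S > 0 and τ > 0, the Black–Scholes call price V_BS satisfies the forward Black–Scholes partial differential equation ∂V_BS/∂τ (τ, S) = (σ²S²/2) ∂²V_BS/∂S² (τ, S) + rS ∂V_BS/∂S (τ, S) − r V_BS(τ, S). -/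
open MeasureTheory Filter Real

/-- The standard normal cumulative distribution function. -/
noncomputable def Phi (x : ℝ) : ℝ :=
  ∫ t in Set.Iic x, Real.exp (-t ^ 2 / 2) / Real.sqrt (2 * Real.pi)

/-- The standard normal density. -/
noncomputable def phi (x : ℝ) : ℝ := Real.exp (-x ^ 2 / 2) / Real.sqrt (2 * Real.pi)

/-- The Black–Scholes `d₁`. -/
noncomputable def d1 (σ r K τ S : ℝ) : ℝ :=
  (Real.log (S / K) + (r + σ ^ 2 / 2) * τ) / (σ * Real.sqrt τ)

/-- The Black–Scholes `d₂`. -/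
noncomputable def d2 (σ r K τ S : ℝ) : ℝ := d1 σ r K τ S - σ * Real.sqrt τ

/-- The Black–Scholes price of a European call with volatility `σ`, interest rate `r`,
strike `K`, time to maturity `τ` and asset price `S`. -/
noncomputable def Vbs (σ r K τ S : ℝ) : ℝ :=
  S * Phi (d1 σ r K τ S) - K * Real.exp (-r * τ) * Phi (d2 σ r K τ S)

lemma continuous_phi : Continuous phi := by
  unfold phi
  exact (Real.continuous_exp.comp (by continuity)).div_const _

lemma integrable_phi : Integrable phi := by
  have h : Integrable (fun t : ℝ => Real.exp (-(1/2) * t ^ 2)) :=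
    integrable_exp_neg_mul_sq (by norm_num)
  have : phi = fun t => Real.exp (-(1/2) * t ^ 2) / Real.sqrt (2 * Real.pi) := by
    funext t
    have : -t ^ 2 / 2 = -(1/2) * t ^ 2 := by ring
    simp [phi, this]
  rw [this]
  exact h.div_const _

lemma hasDerivAt_Phi (x : ℝ) : HasDerivAt Phi (phi x) x := by
  have key : ∀ y : ℝ, Phi y = Phi 0 + ∫ t in (0:ℝ)..y, phi t := by
    intro y
    have h := intervalIntegral.integral_Iic_sub_Iic
      (integrable_phi.integrableOn (s := Set.Iic 0)) (integrable_phi.integrableOn (s := Set.Iic y))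
    have h0 : Phi 0 = ∫ t in Set.Iic (0:ℝ), phi t := rfl
    have hy : Phi y = ∫ t in Set.Iic y, phi t := rfl
    rw [h0, hy]
    linarith [h]
  have hD : HasDerivAt (fun y => Phi 0 + ∫ t in (0:ℝ)..y, phi t) (phi x) x := by
    exact (intervalIntegral.integral_hasDerivAt_right
      (integrable_phi.intervalIntegrable)
      (continuous_phi.stronglyMeasurable.stronglyMeasurableAtFilter)
      continuous_phi.continuousAt).const_add _
  have : Phi = fun y => Phi 0 + ∫ t in (0:ℝ)..y, phi t := funext key
  rw [this]
  exact hD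

lemma key_identity (σ r K τ S : ℝ) (hσ : 0 < σ) (hK : 0 < K) (hS : 0 < S) (hτ : 0 < τ) :
    S * phi (d1 σ r K τ S) = K * Real.exp (-r * τ) * phi (d2 σ r K τ S) := by
  set s := Real.sqrt τ with hs
  have hs0 : 0 < s := Real.sqrt_pos.mpr hτ
  have hsq : s ^ 2 = τ := Real.sq_sqrt hτ.le
  set D1 := d1 σ r K τ S with hD1
  have h1 : D1 * (σ * s) = Real.log (S / K) + (r + σ ^ 2 / 2) * τ := by
    rw [hD1, d1]
    field_simp
    rw [← hs]
  have hexp : -(d2 σ r K τ S) ^ 2 / 2 = -D1 ^ 2 / 2 + (Real.log (S / K) + r * τ) := by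
    have h2 : d2 σ r K τ S = D1 - σ * s := rfl
    rw [h2]
    have : s ^ 2 = τ := hsq
    nlinarith [h1, hsq]
  unfold phi
  rw [hexp, Real.exp_add, Real.exp_add, Real.exp_log (div_pos hS hK)]
  have h2π : Real.sqrt (2 * Real.pi) > 0 := Real.sqrt_pos.mpr (by positivity)
  have he : Real.exp (-(r * τ)) * Real.exp (r * τ) = 1 := by
    rw [← Real.exp_add]; simp
  field_simp
  linear_combination (-1 : ℝ) * he

lemma hasDerivAt_d1_S (σ r K τ : ℝ) (hσ : 0 < σ) (hK : 0 < K) (hτ : 0 < τ)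
    {S : ℝ} (hS : 0 < S) :
    HasDerivAt (fun S' => d1 σ r K τ S') (1 / (S * (σ * Real.sqrt τ))) S := by
  have hs0 : 0 < Real.sqrt τ := Real.sqrt_pos.mpr hτ
  have h1 : HasDerivAt (fun S' : ℝ => S' / K) (1 / K) S := by
    simpa using (hasDerivAt_id S).div_const K
  have h2 : HasDerivAt (fun S' : ℝ => Real.log (S' / K)) (1 / K / (S / K)) S :=
    h1.log (div_pos hS hK).ne'
  have h3 := (h2.add_const ((r + σ ^ 2 / 2) * τ)).div_const (σ * Real.sqrt τ)
  refine h3.congr_deriv ?_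
  field_simp

lemma hasDerivAt_Vbs_S (σ r K τ : ℝ) (hσ : 0 < σ) (hK : 0 < K) (hτ : 0 < τ)
    {S : ℝ} (hS : 0 < S) :
    HasDerivAt (fun S' => Vbs σ r K τ S') (Phi (d1 σ r K τ S)) S := by
  have hs0 : 0 < Real.sqrt τ := Real.sqrt_pos.mpr hτ
  have hd1 := hasDerivAt_d1_S σ r K τ hσ hK hτ hS
  have hd2 : HasDerivAt (fun S' => d2 σ r K τ S') (1 / (S * (σ * Real.sqrt τ))) S := by
    unfold d2
    exact hd1.sub_const _
  have hP1 : HasDerivAt (fun S' => Phi (d1 σ r K τ S'))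
      (phi (d1 σ r K τ S) * (1 / (S * (σ * Real.sqrt τ)))) S :=
    (hasDerivAt_Phi _).comp S hd1
  have hP2 : HasDerivAt (fun S' => Phi (d2 σ r K τ S'))
      (phi (d2 σ r K τ S) * (1 / (S * (σ * Real.sqrt τ)))) S :=
    (hasDerivAt_Phi _).comp S hd2
  have hV : HasDerivAt (fun S' => Vbs σ r K τ S')
      ((1 * Phi (d1 σ r K τ S) + S * (phi (d1 σ r K τ S) * (1 / (S * (σ * Real.sqrt τ)))))
        - K * Real.exp (-r * τ) * (phi (d2 σ r K τ S) * (1 / (S * (σ * Real.sqrt τ))))) S := by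
    unfold Vbs
    exact ((hasDerivAt_id S).mul hP1).sub (hP2.const_mul _)
  convert hV using 1
  have hkey := key_identity σ r K τ S hσ hK hS hτ
  simp only [neg_mul] at hkey ⊢
  field_simp
  linear_combination -hkey

lemma deriv_Vbs_S (σ r K τ : ℝ) (hσ : 0 < σ) (hK : 0 < K) (hτ : 0 < τ)
    {S : ℝ} (hS : 0 < S) :
    deriv (fun S' => Vbs σ r K τ S') S = Phi (d1 σ r K τ S) :=
  (hasDerivAt_Vbs_S σ r K τ hσ hK hτ hS).deriv

lemma deriv2_Vbs_S (σ r K τ : ℝ) (hσ : 0 < σ) (hK : 0 < K) (hτ : 0 < τ)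
    {S : ℝ} (hS : 0 < S) :
    deriv (deriv (fun S' => Vbs σ r K τ S')) S
      = phi (d1 σ r K τ S) * (1 / (S * (σ * Real.sqrt τ))) := by
  have hEq : deriv (fun S' => Vbs σ r K τ S') =ᶠ[nhds S] (fun S' => Phi (d1 σ r K τ S')) := by
    filter_upwards [eventually_gt_nhds hS] with S' hS'
    exact deriv_Vbs_S σ r K τ hσ hK hτ hS'
  rw [hEq.deriv_eq]
  exact ((hasDerivAt_Phi _).comp S (hasDerivAt_d1_S σ r K τ hσ hK hτ hS)).deriv

lemma hasDerivAt_Vbs_tau (σ r K : ℝ) (hσ : 0 < σ) (hK : 0 < K) {S τ : ℝ}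
    (hS : 0 < S) (hτ : 0 < τ) :
    HasDerivAt (fun τ' => Vbs σ r K τ' S)
      (σ * S * phi (d1 σ r K τ S) / (2 * Real.sqrt τ)
        + r * K * Real.exp (-r * τ) * Phi (d2 σ r K τ S)) τ := by
  have hs0 : 0 < Real.sqrt τ := Real.sqrt_pos.mpr hτ
  have hne : σ * Real.sqrt τ ≠ 0 := by positivity
  have hsqrt := Real.hasDerivAt_sqrt hτ.ne'
  have hnum : HasDerivAt (fun τ' : ℝ => Real.log (S / K) + (r + σ ^ 2 / 2) * τ')
      ((r + σ ^ 2 / 2) * 1) τ := ((hasDerivAt_id τ).const_mul _).const_add _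
  have hden : HasDerivAt (fun τ' : ℝ => σ * Real.sqrt τ')
      (σ * (1 / (2 * Real.sqrt τ))) τ := hsqrt.const_mul σ
  set D1' := ((r + σ ^ 2 / 2) * 1 * (σ * Real.sqrt τ)
      - (Real.log (S / K) + (r + σ ^ 2 / 2) * τ) * (σ * (1 / (2 * Real.sqrt τ))))
      / (σ * Real.sqrt τ) ^ 2 with hD1'
  have hd1 : HasDerivAt (fun τ' => d1 σ r K τ' S) D1' τ := by
    unfold d1
    exact hnum.div hden hne
  have hd2 : HasDerivAt (fun τ' => d2 σ r K τ' S) (D1' - σ * (1 / (2 * Real.sqrt τ))) τ := by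
    unfold d2
    exact hd1.sub (hsqrt.const_mul σ)
  have hP1 : HasDerivAt (fun τ' => Phi (d1 σ r K τ' S)) (phi (d1 σ r K τ S) * D1') τ :=
    (hasDerivAt_Phi _).comp τ hd1
  have hP2 : HasDerivAt (fun τ' => Phi (d2 σ r K τ' S))
      (phi (d2 σ r K τ S) * (D1' - σ * (1 / (2 * Real.sqrt τ)))) τ :=
    (hasDerivAt_Phi _).comp τ hd2
  have hexp : HasDerivAt (fun τ' : ℝ => Real.exp (-r * τ')) (Real.exp (-r * τ) * (-r * 1)) τ :=
    ((hasDerivAt_id τ).const_mul (-r)).exp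
  have hV := (hP1.const_mul S).sub ((hexp.const_mul K).mul hP2)
  have hfun : (fun τ' => Vbs σ r K τ' S)
      = fun τ' => S * Phi (d1 σ r K τ' S) - K * Real.exp (-r * τ') * Phi (d2 σ r K τ' S) := by
    funext τ'
    rw [Vbs]
  rw [hfun]
  refine hV.congr_deriv (Eq.symm ?_)
  have hkey := key_identity σ r K τ S hσ hK hS hτ
  linear_combination (σ * (1 / (2 * Real.sqrt τ)) - D1') * hkey

/-- Equation (4): the Black–Scholes call price satisfies the forward Black–Scholes PDE
`∂V/∂τ = (σ²S²/2) ∂²V/∂S² + rS ∂V/∂S − rV` for all `S > 0`, `τ > 0`. -/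
theorem stmt5 (σ r K : ℝ) (hσ : 0 < σ) (hK : 0 < K) :
    ∀ S > (0:ℝ), ∀ τ > (0:ℝ),
      deriv (fun τ' => Vbs σ r K τ' S) τ =
        σ ^ 2 * S ^ 2 / 2 * deriv (deriv (fun S' => Vbs σ r K τ S')) S +
          r * S * deriv (fun S' => Vbs σ r K τ S') S - r * Vbs σ r K τ S := by
  intro S hS τ hτ
  have hs0 : 0 < Real.sqrt τ := Real.sqrt_pos.mpr hτ
  rw [(hasDerivAt_Vbs_tau σ r K hσ hK hS hτ).deriv, deriv2_Vbs_S σ r K τ hσ hK hτ hS,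
    deriv_Vbs_S σ r K τ hσ hK hτ hS, Vbs]
  field_simp
  ring
end
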